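/- arXiv:1210.1635 — 5 statements merged into one kernel-verified Lean document; each statement's English description precedes it below -/
import Mathlib

section
/- Let G be a group and G′ a subgroup of finite index in G. Then r(G) ≤ r(G′) and rank(G) = rank(G′). -/
open scoped Pointwise

/-- `algA G i` is the set of elements of `G` whose centralizer contains a
free abelian subgroup of rank at most `i` as a subgroup of finite index. -/
def algA (G : Type*) [Group G] (i : ℕ) : Set G :=
  {g : G | ∃ H : Subgroup (Subgroup.centralizer ({g} : Set G)),
    H.FiniteIndex ∧ ∃ n : ℕ, n ≤ i ∧ Nonempty (H ≃* Multiplicative (Fin n → ℤ))}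

/-- `G` is covered by finitely many left translates of `algA G i`. -/
def algCovers (G : Type*) [Group G] (i : ℕ) : Prop :=
  ∃ F : Finset G, (⋃ g ∈ F, g • algA G i) = Set.univ

/-- `r(G)`: the least `i` such that `G` is a finite union of translates of `algA G i`
(`⊤` if there is no such `i`). -/
noncomputable def algr (G : Type*) [Group G] : ℕ∞ :=
  sInf {n : ℕ∞ | ∃ i : ℕ, n = (i : ℕ∞) ∧ algCovers G i}

/-- The algebraic rank of `G`: the supremum of `r(G*)` over all finite index
subgroups `G*` of `G`. -/
noncomputable def algRank (G : Type*) [Group G] : ℕ∞ :=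
  ⨆ (H : Subgroup G) (_ : H.FiniteIndex), algr H

/-!
An injective homomorphism `f : G₂ →* G` with finite-index image maps `A_i(G₂)` into `A_i(G)`:
the image of the centralizer of `y` has finite index in the centralizer of `f y`, because it
contains the intersection of that centralizer with `f(G₂)`. Translating a finite cover of `G₂`
by representatives of the finitely many cosets of `f(G₂)` then covers `G`, so `r(G) ≤ r(G₂)`.
For the rank, finite-index subgroups of `G` pull back to finite-index subgroups of `G₂` and
finite-index subgroups of `G₂` map isomorphically onto finite-index subgroups of `G`.
-/

open Subgroup

section Embedding

variable {G₂ G : Type*} [Group G₂] [Group G]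

theorem mem_algA_iff {i : ℕ} {g : G} :
    g ∈ algA G i ↔ ∃ K : Subgroup G, K ≤ centralizer {g} ∧ K.relIndex (centralizer {g}) ≠ 0 ∧
      ∃ n ≤ i, Nonempty (K ≃* Multiplicative (Fin n → ℤ)) := by
  constructor
  · rintro ⟨H, hH, n, hn, ⟨e⟩⟩
    refine ⟨H.map (centralizer {g}).subtype, map_subtype_le H, ?_, n, hn,
      ⟨(H.equivMapOfInjective _ (subtype_injective _)).symm.trans e⟩⟩
    rw [relIndex, ← comap_subtype, comap_map_eq_self_of_injective (subtype_injective _)]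
    exact hH.index_ne_zero
  · rintro ⟨K, hK, hKi, n, hn, ⟨e⟩⟩
    exact ⟨K.subgroupOf _, ⟨hKi⟩, n, hn, ⟨(subgroupOfEquivOfLe hK).trans e⟩⟩

theorem relIndex_map_centralizer_ne_zero {f : G₂ →* G} (hf : Function.Injective f)
    [f.range.FiniteIndex] (y : G₂) :
    ((centralizer {y}).map f).relIndex (centralizer {f y}) ≠ 0 := by
  have hle : f.range ⊓ centralizer {f y} ≤ (centralizer {y}).map f := by
    rintro - ⟨⟨x, rfl⟩, hx⟩
    have hx : f x ∈ centralizer {f y} := hx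
    rw [mem_centralizer_singleton_iff, ← map_mul, ← map_mul] at hx
    exact ⟨x, mem_centralizer_singleton_iff.mpr (hf hx), rfl⟩
  have hrange : f.range.relIndex (centralizer {f y}) ≠ 0 :=
    FiniteIndex.index_ne_zero (H := f.range.subgroupOf _)
  rw [← inf_relIndex_right] at hrange
  exact fun h => hrange (relIndex_eq_zero_of_le_left hle h)

theorem map_mem_algA {f : G₂ →* G} (hf : Function.Injective f) [f.range.FiniteIndex]
    {i : ℕ} {y : G₂} (hy : y ∈ algA G₂ i) : f y ∈ algA G i := by
  obtain ⟨K, hK, hKi, n, hn, ⟨e⟩⟩ := mem_algA_iff.mp hy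
  refine mem_algA_iff.mpr ⟨K.map f, ?_, ?_, n, hn, ⟨(K.equivMapOfInjective f hf).symm.trans e⟩⟩
  · simpa only [Set.image_singleton] using
      (map_mono hK).trans (map_centralizer_le_centralizer_image {y} f)
  · refine relIndex_ne_zero_trans ?_ (relIndex_map_centralizer_ne_zero hf y)
    rwa [relIndex_map_map_of_injective _ _ hf]

theorem algCovers_of_injective {f : G₂ →* G} (hf : Function.Injective f) [f.range.FiniteIndex]
    {i : ℕ} (h : algCovers G₂ i) : algCovers G i := by
  classical
  have := Fintype.ofFinite (G ⧸ f.range)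
  obtain ⟨F, hF⟩ := h
  refine ⟨Finset.image (fun p : (G ⧸ f.range) × G₂ => p.1.out * f p.2) (Finset.univ ×ˢ F),
    Set.eq_univ_of_forall fun x => ?_⟩
  set q : G ⧸ f.range := QuotientGroup.mk x
  obtain ⟨z, hz⟩ : q.out⁻¹ * x ∈ f.range := QuotientGroup.eq.mp q.out_eq'
  obtain ⟨g, hgF, hzg⟩ := Set.mem_iUnion₂.mp (hF ▸ Set.mem_univ z)
  refine Set.mem_iUnion₂.mpr ⟨q.out * f g,
    Finset.mem_image.mpr ⟨(q, g), Finset.mem_product.mpr ⟨Finset.mem_univ q, hgF⟩, rfl⟩, ?_⟩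
  rw [Set.mem_smul_set_iff_inv_smul_mem] at hzg ⊢
  convert map_mem_algA hf hzg using 1
  rw [smul_eq_mul, smul_eq_mul, map_mul, map_inv, hz, mul_inv_rev, mul_assoc]

theorem algr_le_of_injective {f : G₂ →* G} (hf : Function.Injective f) [f.range.FiniteIndex] :
    algr G ≤ algr G₂ :=
  sInf_le_sInf fun _ ⟨i, hn, hcov⟩ => ⟨i, hn, algCovers_of_injective hf hcov⟩

theorem algr_congr (e : G₂ ≃* G) : algr G₂ = algr G := by
  have : (e : G₂ →* G).range.FiniteIndex := by
    rw [MonoidHom.range_eq_top_of_surjective _ e.surjective]; infer_instance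
  have : (e.symm : G →* G₂).range.FiniteIndex := by
    rw [MonoidHom.range_eq_top_of_surjective _ e.symm.surjective]; infer_instance
  exact le_antisymm (algr_le_of_injective (f := e.symm) e.symm.injective)
    (algr_le_of_injective (f := e) e.injective)

theorem algRank_eq_of_injective {f : G₂ →* G} (hf : Function.Injective f)
    [f.range.FiniteIndex] : algRank G = algRank G₂ := by
  apply le_antisymm
  · refine iSup₂_le fun H hH => ?_
    have hcomap : (H.comap f).FiniteIndex :=
      ⟨by rw [index_comap]; exact FiniteIndex.index_ne_zero (H := H.subgroupOf f.range)⟩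
    have : (f.subgroupComap H).range.FiniteIndex := by
      refine finiteIndex_of_le (H := f.range.subgroupOf H) ?_
      rintro ⟨-, hx⟩ ⟨y, rfl⟩
      exact ⟨⟨y, hx⟩, rfl⟩
    have hinj : Function.Injective (f.subgroupComap H) :=
      fun a b h => Subtype.ext (hf (congrArg Subtype.val h))
    exact (algr_le_of_injective hinj).trans (le_iSup₂_of_le (H.comap f) hcomap le_rfl)
  · refine iSup₂_le fun H hH => ?_
    have : (H.map f).FiniteIndex := ⟨by
      rw [H.index_map_of_injective hf]
      exact mul_ne_zero hH.index_ne_zero FiniteIndex.index_ne_zero⟩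
    rw [algr_congr (H.equivMapOfInjective f hf)]
    exact le_iSup₂_of_le (H.map f) this le_rfl

end Embedding

/-- If `G'` is a finite index subgroup of `G`, then `r(G) ≤ r(G')` and
`rank(G) = rank(G')`. -/
theorem stmt_0 (G : Type*) [Group G] (G' : Subgroup G) (hG' : G'.FiniteIndex) :
    algr G ≤ algr G' ∧ algRank G = algRank G' := by
  have : G'.subtype.range.FiniteIndex := by rwa [range_subtype]
  exact ⟨algr_le_of_injective G'.subtype_injective, algRank_eq_of_injective G'.subtype_injective⟩
end

section
/- Let (W,S) be an infinite, irreducible, non-affine right-angled Coxeter system with S finite. Let w ∈ W be an element admitting a reduced expression in which every generator of S appears and each generator appears an odd number of times. Then w is essential. -/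
/-- A Coxeter matrix is right-angled if all off-diagonal entries are `2` or `∞`
(`0` encodes `∞` in Mathlib's convention, i.e. the order of `st` is `2` or `∞`). -/
def CoxeterMatrix.IsRightAngled {B : Type*} (M : CoxeterMatrix B) : Prop :=
  ∀ i j : B, i ≠ j → M i j = 2 ∨ M i j = 0

namespace CoxeterSystem

variable {B : Type*} {W : Type*} [Group W] {M : CoxeterMatrix B} (cs : CoxeterSystem M W)

/-- The Coxeter system is irreducible: the generating set cannot be partitioned into two
nonempty subsets such that every generator in one commutes with every generator in the
other. -/
def IsIrreducible : Prop :=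
  ¬ ∃ A : Set B, A.Nonempty ∧ Aᶜ.Nonempty ∧
      ∀ i ∈ A, ∀ j ∈ Aᶜ, Commute (cs.simple i) (cs.simple j)

/-- A word over `S` is reduced if no shorter word represents the same element of `W`. -/
def ReducedWord (l : List B) : Prop :=
  ∀ l' : List B, cs.wordProd l' = cs.wordProd l → l.length ≤ l'.length

/-- An element `w ∈ W` is essential if the only parabolic subgroup containing it is `W`
itself: whenever `w ∈ u W_J u⁻¹` (equivalently `u⁻¹ w u ∈ W_J`), one has `J = S`. -/
def IsEssential (w : W) : Prop :=
  ∀ (u : W) (J : Set B),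
    u⁻¹ * w * u ∈ Subgroup.closure (cs.simple '' J) → J = Set.univ

/-- `t` is an `s`-blocker if the generators `s` and `t` do not commute. -/
def IsBlocker (s t : B) : Prop := ¬ Commute (cs.simple s) (cs.simple t)

/-- A word is `s`-minimal if between any two consecutive occurrences of `s`
there is an `s`-blocker (vacuously so if `s` occurs at most once). -/
def SMinimal (l : List B) (s : B) : Prop :=
  ∀ l₁ l₂ l₃ : List B, l = l₁ ++ s :: l₂ ++ s :: l₃ → s ∉ l₂ →
    ∃ t ∈ l₂, cs.IsBlocker s t

/-- A word `l` is `s`-good if it is `s`-minimal and, whenever `s` occurs at least twice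
(with `l₁` the prefix before the first occurrence of `s` and `l₃` the suffix after the
last occurrence), the word `l₃ ++ l₁` contains an `s`-blocker. -/
def SGood (l : List B) (s : B) : Prop :=
  cs.SMinimal l s ∧
    ∀ l₁ l₂ l₃ : List B, l = l₁ ++ s :: l₂ ++ s :: l₃ → s ∉ l₁ → s ∉ l₃ →
      ∃ t ∈ l₃ ++ l₁, cs.IsBlocker s t

/-- `B(w)`: the set of "bad" generators of a word, i.e. those for which the word is
not good. -/
def badSet (l : List B) : Set B := {s : B | ¬ cs.SGood l s}

end CoxeterSystem

/-- A group is affine (in the sense relevant here) if it contains a free abelian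
subgroup of finite index. -/
def IsVirtuallyFreeAbelian (W : Type*) [Group W] : Prop :=
  ∃ H : Subgroup W, H.FiniteIndex ∧ ∃ ι : Type, Nonempty (H ≃* Multiplicative (ι →₀ ℤ))

/-! The map `s ↦ eₛ ∈ (ℤ/2)^S` respects every relation `(st)^m = 1` with `m` even, so in a
right-angled Coxeter group it extends to a homomorphism counting, mod 2, how often each generator
occurs in any word for an element. This count is invariant under conjugation, and vanishes outside
`J` on `W_J`; an element in which every generator occurs an odd number of times therefore lies in
no conjugate of a proper standard parabolic subgroup. -/

theorem CoxeterMatrix.IsRightAngled.even {B : Type*} {M : CoxeterMatrix B}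
    (hra : M.IsRightAngled) (i j : B) (hij : i ≠ j) : Even (M i j) := by
  rcases hra i j hij with h | h <;> simp [h]

namespace CoxeterSystem

variable {B W : Type*} [DecidableEq B] [Group W] {M : CoxeterMatrix B}

theorem isLiftable_single_of_even (heven : ∀ i j, i ≠ j → Even (M i j)) :
    M.IsLiftable fun i : B ↦ Multiplicative.ofAdd (Pi.single i (1 : ZMod 2)) := by
  intro i j
  rw [← ofAdd_add, ← ofAdd_nsmul, ofAdd_eq_one]
  rcases eq_or_ne i j with rfl | hij
  · rw [M.diagonal i, one_nsmul, ZModModule.add_self]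
  · obtain ⟨k, hk⟩ := heven i j hij
    rw [hk, ← two_mul, mul_nsmul, two_nsmul, ZModModule.add_self, nsmul_zero]

variable (cs : CoxeterSystem M W) (heven : ∀ i j, i ≠ j → Even (M i j))

def generatorParity : W →* Multiplicative (B → ZMod 2) :=
  cs.lift ⟨_, isLiftable_single_of_even heven⟩

theorem generatorParity_simple (i : B) :
    cs.generatorParity heven (cs.simple i) = Multiplicative.ofAdd (Pi.single i 1) :=
  cs.lift_apply_simple _ i

theorem generatorParity_wordProd (l : List B) (s : B) :
    (cs.generatorParity heven (cs.wordProd l)).toAdd s = l.count s := by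
  induction l with
  | nil => simp [wordProd_nil]
  | cons a t ih =>
    rw [wordProd_cons, map_mul, generatorParity_simple, toAdd_mul, Pi.add_apply, ih,
      List.count_cons, toAdd_ofAdd]
    rcases eq_or_ne a s with rfl | h
    · simp [add_comm]
    · simp [h]

theorem generatorParity_eq_zero_of_mem_closure {J : Set B} {x : W}
    (hx : x ∈ Subgroup.closure (cs.simple '' J)) {s : B} (hs : s ∉ J) :
    (cs.generatorParity heven x).toAdd s = 0 := by
  induction hx using Subgroup.closure_induction with
  | mem _ hy =>
    obtain ⟨j, hj, rfl⟩ := hy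
    rw [generatorParity_simple, toAdd_ofAdd, Pi.single_eq_of_ne' (ne_of_mem_of_not_mem hj hs)]
  | one => simp
  | mul _ _ _ _ hy hz => simp [hy, hz]
  | inv _ _ hy => simp [hy]

end CoxeterSystem

theorem stmt_6_general {B W : Type*} [DecidableEq B] [Group W] {M : CoxeterMatrix B}
    (cs : CoxeterSystem M W) (hra : M.IsRightAngled)
    (w : W) (l : List B) (hlw : cs.wordProd l = w)
    (hodd : ∀ s : B, Odd (l.count s)) :
    cs.IsEssential w := by
  intro u J hmem
  refine Set.eq_univ_of_forall fun s ↦ by_contra fun hs ↦ ?_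
  let φ := cs.generatorParity hra.even
  have hconj : φ (u⁻¹ * w * u) = φ w := by
    rw [map_mul, map_mul, map_inv, inv_mul_cancel_comm]
  have hzero := cs.generatorParity_eq_zero_of_mem_closure hra.even hmem hs
  rw [hconj, ← hlw, cs.generatorParity_wordProd, (hodd s).natCast_zmod_two] at hzero
  exact one_ne_zero hzero

/-- In an infinite, irreducible, non-affine right-angled Coxeter system, any element
admitting a reduced expression in which every generator appears and each generator
appears an odd number of times is essential. -/
theorem stmt_6 {B W : Type*} [Fintype B] [DecidableEq B] [Group W] {M : CoxeterMatrix B}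
    (cs : CoxeterSystem M W) (hra : M.IsRightAngled) [Infinite W]
    (hirr : cs.IsIrreducible) (hnaff : ¬ IsVirtuallyFreeAbelian W)
    (w : W) (l : List B) (hl : cs.ReducedWord l) (hlw : cs.wordProd l = w)
    (hodd : ∀ s : B, Odd (l.count s)) :
    cs.IsEssential w :=
  stmt_6_general cs hra w l hlw hodd
end

section
/- Let (W,S) be a right-angled Coxeter system with S finite. Then every reduced word over S is s-minimal for every generator s occurring in it. -/
namespace CoxeterSystem

variable {B W : Type*} [Group W] {M : CoxeterMatrix B} (cs : CoxeterSystem M W)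

theorem commute_simple_wordProd {s : B} {l : List B}
    (h : ∀ t ∈ l, Commute (cs.simple s) (cs.simple t)) :
    Commute (cs.simple s) (cs.wordProd l) :=
  Commute.list_prod_right _ _ (by simpa using h)

theorem wordProd_append_cons_append_cons {s : B} {l₁ l₂ l₃ : List B}
    (h : Commute (cs.simple s) (cs.wordProd l₂)) :
    cs.wordProd (l₁ ++ s :: l₂ ++ s :: l₃) = cs.wordProd (l₁ ++ l₂ ++ l₃) := by
  simp only [wordProd_append, wordProd_cons, mul_assoc]
  rw [← mul_assoc (cs.wordProd l₂), ← h.eq, mul_assoc, simple_mul_simple_cancel_left]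

/-- Two occurrences of `s` separated only by letters commuting with `s` would cancel. -/
theorem sMinimal_of_reducedWord {l : List B} (hl : cs.ReducedWord l) (s : B) :
    cs.SMinimal l s := by
  rintro l₁ l₂ l₃ rfl -
  by_contra! hno
  have hcomm : Commute (cs.simple s) (cs.wordProd l₂) :=
    cs.commute_simple_wordProd fun t ht => not_not.mp (hno t ht)
  have hlen := hl _ (cs.wordProd_append_cons_append_cons hcomm).symm
  simp only [List.length_append, List.length_cons] at hlen
  omega

end CoxeterSystem

theorem stmt_8_general {B W : Type*} [Group W] {M : CoxeterMatrix B}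
    (cs : CoxeterSystem M W)
    (l : List B) (hl : cs.ReducedWord l) (s : B) :
    cs.SMinimal l s :=
  cs.sMinimal_of_reducedWord hl s

/-- In a right-angled Coxeter system, every reduced word is `s`-minimal for every
generator `s` occurring in it. -/
theorem stmt_8 {B W : Type*} [Fintype B] [Group W] {M : CoxeterMatrix B}
    (cs : CoxeterSystem M W) (hra : M.IsRightAngled)
    (l : List B) (hl : cs.ReducedWord l) (s : B) (hs : s ∈ l) :
    cs.SMinimal l s :=
  stmt_8_general cs l hl s
end

section
/- Let Γ be a finite simple graph with vertex set I, and let Γ′ be the finite simple graph with vertex set I × {−1, 1} in which, for ε ∈ {−1, 1}, vertices (i, ε) and (j, ε) are adjacent if and only if i and j are adjacent in Γ, and vertices (i, −1) and (j, 1) are adjacent if and only if i ≠ j and i and j are adjacent in Γ. Then Γ is a join if and only if Γ′ is a join. -/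
/-!
The two copies `(i, -1)` and `(i, 1)` of a vertex are never adjacent in `Γ′`, and in a join
non-adjacent vertices lie on the same side. So the sides of a join decomposition of `Γ′` are
unions of fibres of the projection to `Γ`, and since `Γ′` and `Γ` have the same adjacency
between distinct vertices of `Γ`, join decompositions of `Γ′` and of `Γ` correspond under
this projection.
-/

/-- A simple graph is a join if its vertex set can be partitioned into two nonempty
sets such that every vertex of one is adjacent to every vertex of the other. -/
def SimpleGraph.IsJoin {V : Type*} (G : SimpleGraph V) : Prop :=
  ∃ A : Set V, A.Nonempty ∧ Aᶜ.Nonempty ∧ ∀ u ∈ A, ∀ v ∈ Aᶜ, G.Adj u v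

/-- The graph `Γ′` associated to `Γ`: its vertex set is `V × {−1, 1}` (with `{−1, 1}`
realized as `ℤˣ`); vertices `(i, ε)` and `(j, ε)` on the same side are adjacent iff
`i` and `j` are adjacent in `Γ`, and vertices `(i, −1)` and `(j, 1)` on opposite sides
are adjacent iff `i ≠ j` and `i` and `j` are adjacent in `Γ`. -/
def gammaPrime {V : Type*} (G : SimpleGraph V) : SimpleGraph (V × ℤˣ) where
  Adj p q := (p.2 = q.2 ∧ G.Adj p.1 q.1) ∨ (p.2 ≠ q.2 ∧ p.1 ≠ q.1 ∧ G.Adj p.1 q.1)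
  symm := ⟨by
    rintro ⟨i, e⟩ ⟨j, f⟩ (⟨h1, h2⟩ | ⟨h1, h2, h3⟩)
    · exact Or.inl ⟨h1.symm, h2.symm⟩
    · exact Or.inr ⟨h1.symm, h2.symm, h3.symm⟩⟩
  loopless := ⟨by
    rintro ⟨i, e⟩ (⟨-, h⟩ | ⟨h, -⟩)
    · exact G.irrefl h
    · exact h rfl⟩

namespace SimpleGraph

variable {V W : Type*}

theorem mem_iff_mem_of_not_adj {H : SimpleGraph W} {B : Set W}
    (hB : ∀ u ∈ B, ∀ v ∈ Bᶜ, H.Adj u v) {u v : W} (huv : ¬H.Adj u v) : u ∈ B ↔ v ∈ B := by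
  constructor
  · intro hu
    by_contra hv
    exact huv (hB u hu v hv)
  · intro hv
    by_contra hu
    exact huv (hB v hv u hu).symm

variable {G : SimpleGraph V}

theorem gammaPrime_adj_fst {p q : V × ℤˣ} (h : (gammaPrime G).Adj p q) : G.Adj p.1 q.1 := by
  rcases h with ⟨-, h⟩ | ⟨-, -, h⟩ <;> exact h

theorem gammaPrime_adj_of_ne {i j : V} (hij : i ≠ j) (h : G.Adj i j) (e f : ℤˣ) :
    (gammaPrime G).Adj (i, e) (j, f) := by
  by_cases hef : e = f
  · exact Or.inl ⟨hef, h⟩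
  · exact Or.inr ⟨hef, hij, h⟩

theorem IsJoin.gammaPrime (hG : G.IsJoin) : (gammaPrime G).IsJoin := by
  obtain ⟨A, ⟨a, ha⟩, ⟨b, hb⟩, hadj⟩ := hG
  refine ⟨Prod.fst ⁻¹' A, ⟨(a, 1), ha⟩, ⟨(b, 1), hb⟩, ?_⟩
  rintro ⟨i, e⟩ hi ⟨j, f⟩ hj
  exact gammaPrime_adj_of_ne (fun h : i = j => hj (h ▸ hi : j ∈ A)) (hadj i hi j hj) e f

theorem isJoin_of_isJoin_gammaPrime (hG : (gammaPrime G).IsJoin) : G.IsJoin := by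
  obtain ⟨B, ⟨⟨a, e⟩, ha⟩, ⟨⟨b, f⟩, hb⟩, hadj⟩ := hG
  have mem_iff (i : V) (e : ℤˣ) : (i, e) ∈ B ↔ (i, 1) ∈ B :=
    mem_iff_mem_of_not_adj hadj fun h => (gammaPrime_adj_fst h).ne rfl
  refine ⟨(·, 1) ⁻¹' B, ⟨a, (mem_iff a e).mp ha⟩, ⟨b, mt (mem_iff b f).mpr hb⟩, ?_⟩
  intro i hi j hj
  exact gammaPrime_adj_fst (hadj (i, 1) hi (j, 1) hj)

end SimpleGraph

theorem stmt_16_general {V : Type*} (G : SimpleGraph V) :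
    G.IsJoin ↔ (gammaPrime G).IsJoin :=
  ⟨SimpleGraph.IsJoin.gammaPrime, SimpleGraph.isJoin_of_isJoin_gammaPrime⟩

/-- `Γ` is a join if and only if `Γ′` is a join. -/
theorem stmt_16 {V : Type*} [Fintype V] (G : SimpleGraph V) :
    G.IsJoin ↔ (gammaPrime G).IsJoin :=
  stmt_16_general G
end

section
/- Let Γ be a finite simple graph containing two distinct non-adjacent vertices. Then the right-angled Artin group A_Γ contains no free abelian subgroup of finite index. -/
/-!
A finite-index subgroup of `A_Γ` contains a positive power of every element, so if it were
abelian then `uⁿ` and `vᵐ` would commute for some `n, m > 0`. For non-adjacent `u ≠ v` the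
assignment `u ↦ T`, `v ↦ S T S⁻¹`, every other vertex `↦ 1`, respects all the commutation
relations of `A_Γ` and so defines a homomorphism to `SL(2, ℤ)`, where `Tⁿ` and `S Tᵐ S⁻¹`
are the unipotent matrices `!![1, n; 0, 1]` and `!![1, 0; -m, 1]`, which do not commute.
-/

/-- The commutator relators of a right-angled Artin group: one relator
`u v u⁻¹ v⁻¹` for each edge `{u, v}` of the graph. -/
def raagRels {V : Type*} (G : SimpleGraph V) : Set (FreeGroup V) :=
  {r | ∃ u v : V, G.Adj u v ∧
    r = FreeGroup.of u * FreeGroup.of v * (FreeGroup.of u)⁻¹ * (FreeGroup.of v)⁻¹}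

/-- The right-angled Artin group `A_Γ` of a finite simple graph `Γ`:
`⟨V ∣ uv = vu whenever {u,v} is an edge⟩`. -/
def RAAG {V : Type*} (G : SimpleGraph V) : Type _ := PresentedGroup (raagRels G)

noncomputable instance {V : Type*} (G : SimpleGraph V) : Group (RAAG G) :=
  inferInstanceAs (Group (PresentedGroup (raagRels G)))

open Matrix.SpecialLinearGroup MatrixGroups in
theorem ModularGroup.not_commute_T_zpow_conj_S {n m : ℤ} (hn : n ≠ 0) (hm : m ≠ 0) :
    ¬ Commute (T ^ n) (S * T ^ m * S⁻¹) := by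
  intro h
  have h00 := congrArg (fun g : SL(2, ℤ) => (g : Matrix (Fin 2) (Fin 2) ℤ) 0 0) h.eq
  simp [coe_T_zpow, S_inv] at h00
  exact h00.elim hn hm

theorem Subgroup.exists_pow_commute_of_finiteIndex {G : Type*} [Group G] {H : Subgroup G}
    [H.FiniteIndex] (hH : ∀ x ∈ H, ∀ y ∈ H, Commute x y) (a b : G) :
    ∃ n m : ℕ, 0 < n ∧ 0 < m ∧ Commute (a ^ n) (b ^ m) := by
  have hind : H.index ≠ 0 := FiniteIndex.index_ne_zero
  obtain ⟨n, hn, -, han⟩ := exists_pow_mem_of_index_ne_zero hind a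
  obtain ⟨m, hm, -, hbm⟩ := exists_pow_mem_of_index_ne_zero hind b
  exact ⟨n, m, hn, hm, hH _ han _ hbm⟩

theorem Subgroup.commute_of_mulEquiv {G A : Type*} [Group G] [CommGroup A] {H : Subgroup G}
    (e : H ≃* A) {x y : G} (hx : x ∈ H) (hy : y ∈ H) : Commute x y := by
  simpa using ((Commute.all (e ⟨x, hx⟩) (e ⟨y, hy⟩)).map e.symm).map H.subtype

namespace RAAG

variable {V : Type*} {G : SimpleGraph V}

def of (v : V) : RAAG G := PresentedGroup.of v

def lift {K : Type*} [Group K] (f : V → K) (hf : ∀ x y, G.Adj x y → Commute (f x) (f y)) :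
    RAAG G →* K :=
  PresentedGroup.toGroup (f := f) <| by
    rintro r ⟨x, y, hxy, rfl⟩
    simp [(hf x y hxy).mul_inv_cancel]

@[simp]
theorem lift_of {K : Type*} [Group K] (f : V → K) (hf : ∀ x y, G.Adj x y → Commute (f x) (f y))
    (v : V) : lift f hf (of v) = f v :=
  PresentedGroup.toGroup.of _

theorem exists_hom_of_not_adj {u v : V} (huv : u ≠ v) (hadj : ¬ G.Adj u v) {K : Type*}
    [Group K] (a b : K) : ∃ φ : RAAG G →* K, φ (of u) = a ∧ φ (of v) = b := by
  classical
  let f : V → K := fun w => if w = u then a else if w = v then b else 1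
  have hf : ∀ x y, G.Adj x y → Commute (f x) (f y) := by
    intro x y hxy
    -- `{u, v}` is not an edge, so every edge has an endpoint sent to `1`
    by_cases hx : x = u <;> by_cases hx' : x = v <;> by_cases hy : y = u <;>
      by_cases hy' : y = v <;> simp_all [f, G.adj_comm]
  exact ⟨lift f hf, by simp [f], by simp [f, huv.symm]⟩

open ModularGroup in
theorem not_commute_of_zpow {u v : V} (huv : u ≠ v) (hadj : ¬ G.Adj u v) {n m : ℤ}
    (hn : n ≠ 0) (hm : m ≠ 0) : ¬ Commute (of u ^ n : RAAG G) (of v ^ m) := by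
  obtain ⟨φ, hφu, hφv⟩ := exists_hom_of_not_adj huv hadj T (S * T * S⁻¹)
  intro h
  apply not_commute_T_zpow_conj_S hn hm
  simpa [hφu, hφv, conj_zpow] using h.map φ

end RAAG

theorem stmt_18_general {V : Type*} (G : SimpleGraph V)
    (u v : V) (huv : u ≠ v) (hadj : ¬ G.Adj u v) :
    ¬ ∃ H : Subgroup (RAAG G), H.FiniteIndex ∧
        ∃ ι : Type, Nonempty (H ≃* Multiplicative (ι →₀ ℤ)) := by
  rintro ⟨H, hH, ι, ⟨e⟩⟩
  obtain ⟨n, m, hn, hm, h⟩ := H.exists_pow_commute_of_finiteIndex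
    (fun x hx y hy => H.commute_of_mulEquiv e hx hy) (RAAG.of u) (RAAG.of v)
  apply RAAG.not_commute_of_zpow huv hadj (n := n) (m := m) (by omega) (by omega)
  simpa only [zpow_natCast] using h

/-- If a finite simple graph `Γ` has two distinct non-adjacent vertices, then the
right-angled Artin group `A_Γ` contains no free abelian subgroup of finite index. -/
theorem stmt_18 {V : Type*} [Fintype V] (G : SimpleGraph V)
    (u v : V) (huv : u ≠ v) (hadj : ¬ G.Adj u v) :
    ¬ ∃ H : Subgroup (RAAG G), H.FiniteIndex ∧
        ∃ ι : Type, Nonempty (H ≃* Multiplicative (ι →₀ ℤ)) :=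
  stmt_18_general G u v huv hadj
end
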